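/- arXiv:1905.13078 — 2 statements merged into one kernel-verified Lean document; each statement's English description precedes it below -/
import Mathlib

section
/- For every real number μ with −1 < μ ≤ −1/2, the skew-symmetric bilinear bracket on ℝ⁷ determined (via the convention dα(x,y) = −α([x,y]) for 1-forms α) by the structure equations de¹ = e⁴⁵, de² = −2μ e²⁷, de³ = −2 e³⁷, de⁴ = 2 e¹⁵, de⁵ = e¹⁴, de⁶ = 2(1+μ) e⁶⁷, de⁷ = 0 (with respect to the dual basis e¹,…,e⁷ of the standard basis e₁,…,e₇) satisfies the Jacobi identity, hence defines a Lie algebra 𝔤_μ. -/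
/-!
Common framework: unbundled exterior forms on ℝ⁷, wedge product, interior product,
Chevalley–Eilenberg differential of a Lie bracket, induced inner products on forms,
derived series, and the Lie algebras / G₂-structures from the paper
"Laplacian flow solitons on non-solvable Lie groups" (Fino–Raffero).
-/

open scoped BigOperators

namespace G2Solitons

/-- The underlying vector space ℝ⁷. -/
abbrev V7 : Type := Fin 7 → ℝ

/-- Unbundled `k`-forms: real-valued functions of `k` vectors of ℝ⁷. -/
abbrev Form (k : ℕ) : Type := (Fin k → V7) → ℝ

/-- Standard basis of ℝ⁷. -/
def stdB (i : Fin 7) : V7 := fun j => if j = i then 1 else 0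

/-- The basic `k`-form `e^{i₁} ∧ ⋯ ∧ e^{i_k}` (determinant convention, 0-indexed). -/
def eB {k : ℕ} (idx : Fin k → Fin 7) : Form k :=
  fun v => Matrix.det (Matrix.of fun a b : Fin k => v a (idx b))

/-- Wedge product of a `p`-form and a `q`-form (convention
`(α∧β)(v) = (p!q!)⁻¹ ∑_σ sgn σ · α(v∘σ|_{first p}) β(v∘σ|_{last q})`). -/
noncomputable def wedge {p q : ℕ} (α : Form p) (β : Form q) : Form (p + q) := fun v =>
  ((p.factorial * q.factorial : ℕ) : ℝ)⁻¹ *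
    ∑ σ : Equiv.Perm (Fin (p + q)),
      ((Equiv.Perm.sign σ : ℤ) : ℝ) *
        (α (fun i => v (σ (Fin.castAdd q i))) * β (fun j => v (σ (Fin.natAdd p j))))

/-- Interior product of a vector with a `(k+1)`-form. -/
def iprod {k : ℕ} (u : V7) (α : Form (k + 1)) : Form k := fun v => α (Fin.cons u v)

/-- Chevalley–Eilenberg differential of a `(k+1)`-form with respect to a bracket:
`(dα)(x₀,…,x_{k+1}) = ∑_{i<j} (-1)^{i+j} α([xᵢ,xⱼ], x₀,…,x̂ᵢ,…,x̂ⱼ,…,x_{k+1})`. -/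
def dCE {k : ℕ} (br : V7 → V7 → V7) (α : Form (k + 1)) : Form (k + 2) := fun v =>
  ∑ i : Fin (k + 2), ∑ j : Fin (k + 2),
    if (i : ℕ) < (j : ℕ) then
      (-1 : ℝ) ^ ((i : ℕ) + (j : ℕ)) *
        α (Fin.cons (br (v i) (v j)) fun l : Fin k =>
            if (l : ℕ) < (i : ℕ) then v ⟨(l : ℕ), by omega⟩
            else if (l : ℕ) + 1 < (j : ℕ) then v ⟨(l : ℕ) + 1, by omega⟩
            else v ⟨(l : ℕ) + 2, by omega⟩)
    else 0

/-- Inner product on `k`-forms induced by the diagonal metric `g = ∑ᵢ c i (e^i)²`,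
determined by declaring `{(c i₁ ⋯ c i_k)^{-1/2} e^{i₁⋯i_k} : i₁ < ⋯ < i_k}` orthonormal. -/
noncomputable def formInner (c : Fin 7 → ℝ) {k : ℕ} (α β : Form k) : ℝ :=
  ((k.factorial : ℕ) : ℝ)⁻¹ *
    ∑ f : Fin k → Fin 7,
      (∏ i, c (f i))⁻¹ * (α (fun i => stdB (f i)) * β (fun i => stdB (f i)))

/-- Natural action of an endomorphism `D` on a `k`-form:
`(D.α)(v₁,…,v_k) = ∑ᵢ α(v₁,…,D vᵢ,…,v_k)`. -/
def actD {k : ℕ} (D : V7 → V7) (α : Form k) : Form k := fun v =>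
  ∑ i : Fin k, α (Function.update v i (D (v i)))

/-- The Jacobi identity for a bilinear bracket. -/
def Jacobi (br : V7 → V7 → V7) : Prop :=
  ∀ x y z : V7, br (br x y) z + br (br y z) x + br (br z x) y = 0

/-- Unimodularity: `tr (ad x) = 0` for all `x`. -/
def Unimodular (br : V7 → V7 → V7) : Prop :=
  ∀ x : V7, ∑ i : Fin 7, br x (stdB i) i = 0

/-- Derivation property for a map `D`. -/
def IsDeriv (br : V7 → V7 → V7) (D : V7 → V7) : Prop :=
  ∀ x y : V7, D (br x y) = br (D x) y + br x (D y)

/-- Derived series of a bracket. -/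
def derSeries (br : V7 → V7 → V7) : ℕ → Submodule ℝ V7
  | 0 => ⊤
  | n + 1 => Submodule.span ℝ
      {z | ∃ x ∈ derSeries br n, ∃ y ∈ derSeries br n, z = br x y}

/-- Solvability: the derived series terminates at zero. -/
def Solvable (br : V7 → V7 → V7) : Prop := ∃ n, derSeries br n = ⊥

/-- Real cube root (the real root, also for negative arguments). -/
noncomputable def cbrt (x : ℝ) : ℝ :=
  if x < 0 then -((-x) ^ ((1 : ℝ) / 3)) else x ^ ((1 : ℝ) / 3)

/-- The standard volume form `e^{1234567}`. -/
def vol7 : Form 7 := eB ![0, 1, 2, 3, 4, 5, 6]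

end G2Solitons

namespace G2Solitons

noncomputable section

/-- The bracket of the Lie algebra `𝔤_μ` with structure equations
`(e⁴⁵, -2μ e²⁷, -2 e³⁷, 2 e¹⁵, e¹⁴, 2(1+μ) e⁶⁷, 0)`,
via the convention `dα(x,y) = -α([x,y])`. -/
def brG (μ : ℝ) : V7 → V7 → V7 := fun x y =>
  ![-(x 3 * y 4 - x 4 * y 3),
    2 * μ * (x 1 * y 6 - x 6 * y 1),
    2 * (x 2 * y 6 - x 6 * y 2),
    -2 * (x 0 * y 4 - x 4 * y 0),
    -(x 0 * y 3 - x 3 * y 0),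
    -2 * (1 + μ) * (x 5 * y 6 - x 6 * y 5),
    0]

/-- `φ_μ = -2μ e¹²⁷ + e³⁴⁷ + 2(1+μ) e⁵⁶⁷ + e¹³⁵ - e¹⁴⁶ - e²³⁶ - e²⁴⁵`. -/
def phiG (μ : ℝ) : Form 3 := fun v =>
  -2 * μ * eB ![0, 1, 6] v + eB ![2, 3, 6] v + 2 * (1 + μ) * eB ![4, 5, 6] v
    + eB ![0, 2, 4] v - eB ![0, 3, 5] v - eB ![1, 2, 5] v - eB ![1, 3, 4] v

/-- Diagonal coefficients of the metric
`g_{φ_μ} = (2μ²/(1+μ))^{1/3}[(e¹)²+(e²)²] + (-4μ(1+μ))^{-1/3}[(e³)²+(e⁴)²]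
  + (2(1+μ)/(-μ))^{1/3}[(e⁵)²+(e⁶)²] + ((4μ(1+μ))²)^{1/3}(e⁷)²`. -/
noncomputable def cG (μ : ℝ) : Fin 7 → ℝ :=
  ![(2 * μ ^ 2 / (1 + μ)) ^ ((1 : ℝ) / 3),
    (2 * μ ^ 2 / (1 + μ)) ^ ((1 : ℝ) / 3),
    (-(4 * μ * (1 + μ))) ^ (-(1 : ℝ) / 3),
    (-(4 * μ * (1 + μ))) ^ (-(1 : ℝ) / 3),
    (2 * (1 + μ) / (-μ)) ^ ((1 : ℝ) / 3),
    (2 * (1 + μ) / (-μ)) ^ ((1 : ℝ) / 3),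
    ((4 * μ * (1 + μ)) ^ 2) ^ ((1 : ℝ) / 3)]

/-- The metric `g_{φ_μ}` as a bilinear form. -/
noncomputable def gG (μ : ℝ) (u v : V7) : ℝ := ∑ i : Fin 7, cG μ i * u i * v i

/-- The volume form `dV_{φ_μ} = (-4μ(1+μ))^{1/3} e¹²³⁴⁵⁶⁷`. -/
noncomputable def dVG (μ : ℝ) : Form 7 := fun v =>
  (-(4 * μ * (1 + μ))) ^ ((1 : ℝ) / 3) * vol7 v

/-- `τ_μ = -2(2μ²/(1+μ))^{1/3} e¹² + ((2/(μ(1+μ)))²)^{1/3} e³⁴ - 2((2(1+μ)²/μ)²)^{1/3} e⁵⁶`. -/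
noncomputable def tauG (μ : ℝ) : Form 2 := fun v =>
  -2 * (2 * μ ^ 2 / (1 + μ)) ^ ((1 : ℝ) / 3) * eB ![0, 1] v
    + ((2 / (μ * (1 + μ))) ^ 2) ^ ((1 : ℝ) / 3) * eB ![2, 3] v
    - 2 * ((2 * (1 + μ) ^ 2 / μ) ^ 2) ^ ((1 : ℝ) / 3) * eB ![4, 5] v

/-- `D_μ = -2 diag(0, (4(1+μ)/μ²)^{1/3}, (4μ(1+μ))^{1/3}, 0, 0, -(4μ/(1+μ)²)^{1/3}, 0)`
with real cube roots. -/
noncomputable def DG (μ : ℝ) : V7 → V7 := fun x i =>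
  -2 * (![0, cbrt (4 * (1 + μ) / μ ^ 2), cbrt (4 * μ * (1 + μ)), 0, 0,
          -cbrt (4 * μ / (1 + μ) ^ 2), 0] i) * x i

/-- `λ_μ = 2(μ² + μ + 1)((2/(μ(1+μ)))²)^{1/3}`. -/
noncomputable def lamG (μ : ℝ) : ℝ :=
  2 * (μ ^ 2 + μ + 1) * ((2 / (μ * (1 + μ))) ^ 2) ^ ((1 : ℝ) / 3)

end

end G2Solitons

namespace G2Solitons

theorem jacobi_brG_general (μ : ℝ) :
    Jacobi (brG μ) := by
  intro x y z
  funext i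
  fin_cases i <;> simp only [brG, Pi.add_apply, Pi.zero_apply, Fin.reduceFinMk, Matrix.cons_val] <;> ring

/-- the structure equations of `𝔤_μ` satisfy the Jacobi identity. -/
theorem jacobi_brG (μ : ℝ) (hμ₁ : -1 < μ) (hμ₂ : μ ≤ -1/2) :
    Jacobi (brG μ) :=
  jacobi_brG_general μ

end G2Solitons
end

section
/- For every real number μ with −1 < μ ≤ −1/2, the Lie algebra 𝔤_μ on ℝ⁷ with structure equations de¹ = e⁴⁵, de² = −2μ e²⁷, de³ = −2 e³⁷, de⁴ = 2 e¹⁵, de⁵ = e¹⁴, de⁶ = 2(1+μ) e⁶⁷, de⁷ = 0 is unimodular (i.e., tr(ad x) = 0 for every x ∈ 𝔤_μ) and is not solvable. -/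
/-!
Common framework: unbundled exterior forms on ℝ⁷, wedge product, interior product,
Chevalley–Eilenberg differential of a Lie bracket, induced inner products on forms,
derived series, and the Lie algebras / G₂-structures from the paper
"Laplacian flow solitons on non-solvable Lie groups" (Fino–Raffero).
-/

open scoped BigOperators

/-!
The trace of `ad x` on `𝔤_μ` is `(-2μ - 2 + 2(1 + μ)) x₇ = 0`. The vectors `e₁, e₄, e₅`
(`stdB 0, stdB 3, stdB 4`) span a copy of `𝔰𝔩(2, ℝ)`: `[e₄, e₅] = -e₁`, `[e₁, e₄] = -e₅`,
`[e₁, e₅] = -2e₄`. A subspace equal to its own derived algebra lies in every term of the derived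
series, so the series never reaches zero.
-/

namespace G2Solitons

section DerivedSeries

variable (br : V7 → V7 → V7)

theorem subset_derSeries_of_subset_span_image2 {s : Set V7}
    (hs : s ⊆ Submodule.span ℝ (Set.image2 br s s)) (n : ℕ) : s ⊆ derSeries br n := by
  induction n with
  | zero => exact fun _ _ => Submodule.mem_top
  | succ n ih =>
    exact hs.trans <| Submodule.span_mono fun _ ⟨x, hx, y, hy, hz⟩ => ⟨x, ih hx, y, ih hy, hz.symm⟩

theorem not_solvable_of_subset_span_image2 {s : Set V7}
    (hs : s ⊆ Submodule.span ℝ (Set.image2 br s s)) {v : V7} (hv : v ∈ s) (hv₀ : v ≠ 0) :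
    ¬ Solvable br := by
  rintro ⟨n, hn⟩
  have hvn := subset_derSeries_of_subset_span_image2 br hs n hv
  rw [hn, SetLike.mem_coe, Submodule.mem_bot] at hvn
  exact hv₀ hvn

end DerivedSeries

theorem stdB_ne_zero (i : Fin 7) : stdB i ≠ 0 := fun h => by
  simpa [stdB] using congrFun h i

theorem unimodular_brG (μ : ℝ) : Unimodular (brG μ) := by
  intro x
  simp only [brG, Fin.isValue, stdB, mul_ite, mul_one, mul_zero, neg_sub, neg_mul,
    Fin.sum_univ_seven, Fin.reduceEq, ↓reduceIte, sub_self, one_ne_zero, zero_sub, mul_neg, neg_neg,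
    sub_zero, neg_zero, Matrix.cons_val_zero, zero_ne_one, Matrix.cons_val_one, zero_add,
    Matrix.cons_val, add_zero]
  ring

theorem brG_stdB_three_four (μ : ℝ) : brG μ (stdB 3) (stdB 4) = -stdB 0 := by
  funext i; fin_cases i <;> simp [brG, stdB]

theorem brG_stdB_zero_three (μ : ℝ) : brG μ (stdB 0) (stdB 3) = -stdB 4 := by
  funext i; fin_cases i <;> simp [brG, stdB]

theorem brG_stdB_zero_four (μ : ℝ) : brG μ (stdB 0) (stdB 4) = (-2 : ℝ) • stdB 3 := by
  funext i; fin_cases i <;> simp [brG, stdB]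

theorem not_solvable_brG (μ : ℝ) : ¬ Solvable (brG μ) := by
  set s : Set V7 := {stdB 0, stdB 3, stdB 4}
  have bracket_mem {x y : V7} (hx : x ∈ s) (hy : y ∈ s) :
      brG μ x y ∈ Submodule.span ℝ (Set.image2 (brG μ) s s) :=
    Submodule.subset_span (Set.mem_image2_of_mem hx hy)
  refine not_solvable_of_subset_span_image2 (brG μ) (s := s) ?_ (Set.mem_insert _ _)
    (stdB_ne_zero 0)
  rintro v (rfl | rfl | rfl)
  · rw [← neg_neg (stdB 0), ← brG_stdB_three_four μ]
    exact neg_mem (bracket_mem (by simp [s]) (by simp [s]))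
  · have h : stdB 3 = (-(1 / 2) : ℝ) • brG μ (stdB 0) (stdB 4) := by
      rw [brG_stdB_zero_four, smul_smul]; norm_num
    rw [h]
    exact Submodule.smul_mem _ _ (bracket_mem (by simp [s]) (by simp [s]))
  · rw [← neg_neg (stdB 4), ← brG_stdB_zero_three μ]
    exact neg_mem (bracket_mem (by simp [s]) (by simp [s]))

theorem unimodular_not_solvable_brG_general (μ : ℝ) :
    Unimodular (brG μ) ∧ ¬ Solvable (brG μ) :=
  ⟨unimodular_brG μ, not_solvable_brG μ⟩

/-- `𝔤_μ` is unimodular and not solvable. -/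
theorem unimodular_not_solvable_brG (μ : ℝ) (hμ₁ : -1 < μ) (hμ₂ : μ ≤ -1/2) :
    Unimodular (brG μ) ∧ ¬ Solvable (brG μ) :=
  unimodular_not_solvable_brG_general μ

end G2Solitons
end
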